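/- For any coloring of an AGW graph, every state belongs to some F-clique. -/

import Mathlib

/-- A directed cycle in the multigraph `E`: a nonempty list of distinct vertices,
consecutive vertices joined by edges, and an edge from the last back to the first. -/
def IsCycle {V : Type} (E : V → Multiset V) (l : List V) : Prop :=
  ∃ h : l ≠ [], l.Nodup ∧ l.Chain' (fun a b => b ∈ E a) ∧ l.head h ∈ E (l.getLast h)

/-- An AGW graph: constant outdegree `k`, strongly connected, and the gcd of the
lengths of all directed cycles is 1 (every common divisor of cycle lengths is 1). -/
def IsAGW {V : Type} (E : V → Multiset V) (k : ℕ) : Prop :=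
  (∀ v, Multiset.card (E v) = k) ∧
  (∀ u v : V, Relation.ReflTransGen (fun a b => b ∈ E a) u v) ∧
  (∀ d : ℕ, (∀ l : List V, IsCycle E l → d ∣ l.length) → d = 1)

/-- A coloring of the multigraph: for every vertex `v` the multiset of images
`{δ a v : a ∈ Fin k}` (with multiplicity) equals `E v`. -/
def IsColoring {V : Type} [Fintype V] {k : ℕ} (E : V → Multiset V)
    (δ : Fin k → V → V) : Prop :=
  ∀ v, Multiset.map (fun a => δ a v) (Finset.univ : Finset (Fin k)).val = E v

/-- The map `δ_s` of a word `s`: apply the letters of `s` from left to right. -/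
def wordMap {V : Type} {k : ℕ} (δ : Fin k → V → V) (s : List (Fin k)) (v : V) : V :=
  s.foldl (fun x a => δ a x) v

/-- A pair of states is synchronizing if some word maps them to the same state. -/
def SyncPair {V : Type} {k : ℕ} (δ : Fin k → V → V) (p q : V) : Prop :=
  ∃ s : List (Fin k), wordMap δ s p = wordMap δ s q

/-- A pair is stable if all of its images under words are equal or synchronizing. -/
def Stable {V : Type} {k : ℕ} (δ : Fin k → V → V) (p q : V) : Prop :=
  ∀ u : List (Fin k), SyncPair δ (wordMap δ u p) (wordMap δ u q)

/-- A word is synchronizing if it maps the whole state set to a single state. -/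
def IsSynchronizingWord {V : Type} {k : ℕ} (δ : Fin k → V → V) (s : List (Fin k)) : Prop :=
  ∃ q : V, ∀ v : V, wordMap δ s v = q

/-- An F-clique: an image `V·s` of the whole state set in which every pair of
distinct states is a deadlock (not synchronizing). -/
def IsFClique {V : Type} [Fintype V] [DecidableEq V] {k : ℕ}
    (δ : Fin k → V → V) (F : Finset V) : Prop :=
  (∃ s : List (Fin k), F = Finset.image (wordMap δ s) Finset.univ) ∧
  ∀ p ∈ F, ∀ q ∈ F, p ≠ q → ¬ SyncPair δ p q

/-- A weight function: positive and a left eigenvector of the adjacency matrix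
(multiplicities of edges) with eigenvalue `k`. -/
def IsWeight {V : Type} [Fintype V] [DecidableEq V] (E : V → Multiset V) (k : ℕ)
    (w : V → ℕ) : Prop :=
  (∀ v, 1 ≤ w v) ∧ ∀ q, (∑ p, w p * (E p).count q) = k * w q

/-- The weight of a set of vertices. -/
def weight {V : Type} (w : V → ℕ) (D : Finset V) : ℕ := ∑ p ∈ D, w p

/-- `D` is mapped to a single state by some word. -/
def IsSyncSet {V : Type} [Fintype V] [DecidableEq V] {k : ℕ} (δ : Fin k → V → V)
    (D : Finset V) : Prop :=
  ∃ s : List (Fin k), (D.image (wordMap δ s)).card = 1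

/-- An F-maximal set: a set mapped to a single state by some word, of maximal weight. -/
def IsFMaximal {V : Type} [Fintype V] [DecidableEq V] {k : ℕ} (δ : Fin k → V → V)
    (w : V → ℕ) (D : Finset V) : Prop :=
  IsSyncSet δ D ∧ ∀ D' : Finset V, IsSyncSet δ D' → weight w D' ≤ weight w D

/-- `w*`: the maximal weight of a set mapped to a single state by some word. -/
noncomputable def wstar {V : Type} [Fintype V] [DecidableEq V] {k : ℕ}
    (δ : Fin k → V → V) (w : V → ℕ) : ℕ :=
  sSup {m | ∃ D : Finset V, IsSyncSet δ D ∧ weight w D = m}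

/-- A spanning subgraph: a choice of one outgoing edge of every vertex. -/
def IsSpanning {V : Type} (E : V → Multiset V) (f : V → V) : Prop :=
  ∀ v, f v ∈ E v

/-- The level of a vertex: the least `m` such that `f^[m] v` is `f`-periodic. -/
noncomputable def level {V : Type} (f : V → V) (v : V) : ℕ :=
  sInf {m | ∃ n > 0, f^[n] (f^[m] v) = f^[m] v}

/-- The root of a vertex: its image on the cycle reached along its tree. -/
noncomputable def root {V : Type} (f : V → V) (v : V) : V :=
  f^[level f v] v


/-!
Take a word `s` for which the image `V·s` is as small as possible. Two distinct states of `V·s`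
cannot be synchronized by a word `t`, since then `V·st` would be smaller still, so `V·s` is an
F-clique. Deadlocks pull back along words, so every image `V·su` is again an F-clique, and by
strong connectivity some `u` carries a state of `V·s` to the given state `p`.
-/

open Finset

section Automaton

variable {V : Type} {k : ℕ} (δ : Fin k → V → V)

lemma wordMap_append (s t : List (Fin k)) (v : V) :
    wordMap δ (s ++ t) v = wordMap δ t (wordMap δ s v) := by
  simp [wordMap, List.foldl_append]

lemma SyncPair.of_wordMap {u : List (Fin k)} {x y : V}
    (h : SyncPair δ (wordMap δ u x) (wordMap δ u y)) : SyncPair δ x y := by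
  obtain ⟨t, ht⟩ := h
  exact ⟨u ++ t, by rw [wordMap_append, wordMap_append, ht]⟩

lemma image_wordMap_append [DecidableEq V] (P : Finset V) (s t : List (Fin k)) :
    P.image (wordMap δ (s ++ t)) = (P.image (wordMap δ s)).image (wordMap δ t) := by
  rw [image_image]
  exact image_congr fun v _ => wordMap_append δ s t v

variable [Fintype V]

lemma IsColoring.exists_wordMap_eq_of_reflTransGen {E : V → Multiset V} (hδ : IsColoring E δ)
    {q p : V} (h : Relation.ReflTransGen (fun a b => b ∈ E a) q p) :
    ∃ u : List (Fin k), wordMap δ u q = p := by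
  induction h with
  | refl => exact ⟨[], rfl⟩
  | tail _ hbc ih =>
    obtain ⟨u, rfl⟩ := ih
    rw [← hδ] at hbc
    obtain ⟨a, -, rfl⟩ := Multiset.mem_map.mp hbc
    exact ⟨u ++ [a], wordMap_append δ u [a] _⟩

variable [DecidableEq V]

lemma not_syncPair_of_card_image_minimal {s : List (Fin k)}
    (hmin : ∀ t, #(univ.image (wordMap δ s)) ≤ #(univ.image (wordMap δ t)))
    {x y : V} (hx : x ∈ univ.image (wordMap δ s)) (hy : y ∈ univ.image (wordMap δ s))
    (hxy : x ≠ y) : ¬ SyncPair δ x y := by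
  rintro ⟨t, ht⟩
  have hcard : #((univ.image (wordMap δ s)).image (wordMap δ t)) = #(univ.image (wordMap δ s)) :=
    le_antisymm card_image_le (image_wordMap_append δ univ s t ▸ hmin (s ++ t))
  exact hxy (injOn_of_card_image_eq hcard hx hy ht)

lemma exists_isFClique : ∃ F : Finset V, IsFClique δ F := by
  obtain ⟨s, hmin⟩ : ∃ s : List (Fin k), ∀ t,
      #(univ.image (wordMap δ s)) ≤ #(univ.image (wordMap δ t)) :=
    ⟨_, fun t => Function.argmin_le (fun s => #(univ.image (wordMap δ s))) t⟩
  exact ⟨_, ⟨s, rfl⟩, fun x hx y hy hxy =>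
    not_syncPair_of_card_image_minimal δ hmin hx hy hxy⟩

lemma IsFClique.image_wordMap {F : Finset V} (hF : IsFClique δ F) (u : List (Fin k)) :
    IsFClique δ (F.image (wordMap δ u)) := by
  obtain ⟨⟨s, rfl⟩, hdead⟩ := hF
  refine ⟨⟨s ++ u, (image_wordMap_append δ univ s u).symm⟩, ?_⟩
  rintro _ hx' _ hy' hxy hsync
  obtain ⟨x, hx, rfl⟩ := mem_image.mp hx'
  obtain ⟨y, hy, rfl⟩ := mem_image.mp hy'
  exact hdead x hx y hy (fun h => hxy (h ▸ rfl)) hsync.of_wordMap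

lemma IsFClique.nonempty [Nonempty V] {F : Finset V} (hF : IsFClique δ F) : F.Nonempty := by
  obtain ⟨⟨s, rfl⟩, -⟩ := hF
  exact univ_nonempty.image _

end Automaton

theorem mem_FClique_general {V : Type} [Fintype V] [DecidableEq V]
    (E : V → Multiset V) (k : ℕ) (hAGW : IsAGW E k)
    (δ : Fin k → V → V) (hδ : IsColoring E δ) (p : V) :
    ∃ F : Finset V, IsFClique δ F ∧ p ∈ F := by
  have : Nonempty V := ⟨p⟩
  obtain ⟨F, hF⟩ := exists_isFClique δ
  obtain ⟨q, hq⟩ := hF.nonempty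
  obtain ⟨u, rfl⟩ := hδ.exists_wordMap_eq_of_reflTransGen δ (hAGW.2.1 q p)
  exact ⟨F.image (wordMap δ u), hF.image_wordMap δ u, mem_image_of_mem _ hq⟩

/-- For any coloring of an AGW graph, every state belongs to some F-clique. -/
theorem mem_FClique {V : Type} [Fintype V] [DecidableEq V] [Nonempty V]
    (E : V → Multiset V) (k : ℕ) (hAGW : IsAGW E k)
    (δ : Fin k → V → V) (hδ : IsColoring E δ) (p : V) :
    ∃ F : Finset V, IsFClique δ F ∧ p ∈ F :=
  mem_FClique_general E k hAGW δ hδ p
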